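/- arXiv:1503.03128 — 2 statements merged into one kernel-verified Lean document; each statement's English description precedes it below -/
import Mathlib

section
/- Let G be the standard Gumbel distribution with CDF Λ(x) = exp(-e^{-x}) on ℝ. Then E[G] = γ, the Euler–Mascheroni constant. -/
open MeasureTheory Set Real

/-!
If `E` has the standard exponential law then `P(-log E ≤ x) = P(E ≥ e^{-x}) = exp(-e^{-x})`, so a
Gumbel variable has the law of `-log E`. Its mean is therefore `-∫₀^∞ log t · e^{-t} dt = -Γ'(1) = γ`,
the last integral being the derivative of Euler's integral `Γ(s) = ∫₀^∞ t^{s-1} e^{-t} dt` at `s = 1`.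
-/

theorem integral_log_mul_exp_neg_Ioi_zero :
    ∫ t in Ioi (0 : ℝ), log t * exp (-t) = -eulerMascheroniConstant := by
  have hGammaIntegral := Complex.hasDerivAt_GammaIntegral (s := 1) (by simp)
  have hcast : (∫ t : ℝ in Ioi 0, (t : ℂ) ^ ((1 : ℂ) - 1) * (log t * exp (-t)))
      = ((∫ t in Ioi (0 : ℝ), log t * exp (-t) : ℝ) : ℂ) := by
    simp only [sub_self, Complex.cpow_zero, one_mul, ← Complex.ofReal_mul]
    exact integral_ofReal
  rw [hcast] at hGammaIntegral
  have hGamma : HasDerivAt Complex.Gamma ((∫ t in Ioi (0 : ℝ), log t * exp (-t) : ℝ) : ℂ) 1 := by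
    refine hGammaIntegral.congr_of_eventuallyEq ?_
    have hre : {s : ℂ | 0 < s.re} ∈ nhds (1 : ℂ) :=
      (Complex.continuous_re.isOpen_preimage _ isOpen_Ioi).mem_nhds (by simp)
    filter_upwards [hre] with s hs using Complex.Gamma_eq_integral hs
  have hGammaReal : HasDerivAt Gamma (∫ t in Ioi (0 : ℝ), log t * exp (-t)) 1 :=
    hGamma.real_of_complex
  exact hGammaReal.unique hasDerivAt_Gamma_one

theorem lintegral_exp_neg_Ioi (c : ℝ) :
    ∫⁻ t in Ioi c, ENNReal.ofReal (exp (-t)) = ENNReal.ofReal (exp (-c)) := by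
  rw [← ofReal_integral_eq_lintegral_ofReal (integrableOn_exp_neg_Ioi c)
    (Filter.Eventually.of_forall fun t => (exp_pos _).le), integral_exp_neg_Ioi]

theorem neg_log_preimage_Iic_inter_Ioi (x : ℝ) :
    (fun t => -log t) ⁻¹' Iic x ∩ Ioi 0 = Ici (exp (-x)) := by
  ext t
  simp only [mem_inter_iff, mem_preimage, mem_Iic, mem_Ioi, mem_Ici, neg_le]
  constructor
  · rintro ⟨hlog, ht⟩
    exact (le_log_iff_exp_le ht).mp hlog
  · intro hexp
    have ht : 0 < t := (exp_pos _).trans_le hexp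
    exact ⟨(le_log_iff_exp_le ht).mpr hexp, ht⟩

theorem measurable_neg_log : Measurable fun t : ℝ => -log t :=
  measurable_log.neg

noncomputable def stdExponential : Measure ℝ :=
  (volume.restrict (Ioi 0)).withDensity fun t => ENNReal.ofReal (exp (-t))

theorem stdExponential_apply {s : Set ℝ} (hs : MeasurableSet s) :
    stdExponential s = ∫⁻ t in s ∩ Ioi 0, ENNReal.ofReal (exp (-t)) := by
  rw [stdExponential, withDensity_apply _ hs, Measure.restrict_restrict hs]

instance : IsProbabilityMeasure stdExponential :=
  ⟨by rw [stdExponential_apply MeasurableSet.univ, univ_inter, lintegral_exp_neg_Ioi, neg_zero,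
    exp_zero, ENNReal.ofReal_one]⟩

theorem integral_neg_log_stdExponential :
    ∫ t, -log t ∂stdExponential = eulerMascheroniConstant := by
  have hdensity : stdExponential = (volume.restrict (Ioi 0)).withDensity
      fun t => ((exp (-t)).toNNReal : ENNReal) := rfl
  rw [hdensity, integral_withDensity_eq_integral_smul measurable_neg.exp.real_toNNReal]
  simp only [NNReal.smul_def, coe_toNNReal _ (exp_nonneg _), smul_eq_mul]
  rw [← neg_neg eulerMascheroniConstant, ← integral_log_mul_exp_neg_Ioi_zero, ← integral_neg]
  congr 1 with t
  ring

noncomputable def gumbel : Measure ℝ :=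
  stdExponential.map fun t => -log t

instance : IsProbabilityMeasure gumbel :=
  Measure.isProbabilityMeasure_map measurable_neg_log.aemeasurable

theorem gumbel_Iic (x : ℝ) : gumbel (Iic x) = ENNReal.ofReal (exp (-exp (-x))) := by
  rw [gumbel, Measure.map_apply measurable_neg_log measurableSet_Iic,
    stdExponential_apply (measurable_neg_log measurableSet_Iic), neg_log_preimage_Iic_inter_Ioi,
    ← restrict_Ioi_eq_restrict_Ici, lintegral_exp_neg_Ioi]

theorem integral_id_gumbel : ∫ x, x ∂gumbel = eulerMascheroniConstant := by
  rw [← integral_neg_log_stdExponential]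
  exact integral_map measurable_neg_log.aemeasurable aestronglyMeasurable_id

/-- The standard Gumbel distribution, with CDF `Λ(x) = exp(-e^{-x})`, has
expectation equal to the Euler–Mascheroni constant. -/
theorem gumbel_expectation {Ω : Type*} [MeasurableSpace Ω]
    (μ : Measure Ω) [IsProbabilityMeasure μ]
    (G : Ω → ℝ) (hmeas : Measurable G)
    (hcdf : ∀ x : ℝ,
      μ {ω | G ω ≤ x} = ENNReal.ofReal (Real.exp (-Real.exp (-x)))) :
    ∫ ω, G ω ∂μ = Real.eulerMascheroniConstant := by
  have : IsProbabilityMeasure (μ.map G) := Measure.isProbabilityMeasure_map hmeas.aemeasurable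
  have hlaw : μ.map G = gumbel := Measure.ext_of_Iic _ _ fun x => by
    rw [gumbel_Iic, Measure.map_apply hmeas measurableSet_Iic]
    exact hcdf x
  calc ∫ ω, G ω ∂μ = ∫ x, x ∂(μ.map G) :=
        (integral_map hmeas.aemeasurable aestronglyMeasurable_id).symm
    _ = eulerMascheroniConstant := by rw [hlaw, integral_id_gumbel]
end

section
/- Fix α > 1, x_m > 0, p ∈ (0,1), n ≥ 1 and positive integer r. Define the relaunching normalizing constant a_0 = x_m (pn)^{1/((r+1)α)}, and let a_1 be the unique positive solution of n^{1/α} x_m^{r+1} = x_m p^{-1/α} a^r + a^{r+1}. Then x_m p^{-1/α} + Γ(1 - 1/((r+1)α))·a_1 ≥ x_m p^{-1/α} + Γ(1 - 1/((r+1)α))·a_0 (relaunching has lower asymptotic latency) if and only if p^{1/α} + (np)^{-1/((r+1)α)} ≤ 1. -/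
/-!
Since `Γ(1 - 1/((r+1)α)) > 0`, the latency comparison is `a0 ≤ a1`. As
`f a = x_m p^{-1/α} aʳ + aʳ⁺¹` is strictly increasing on `[0, ∞)`, this is
`f a0 ≤ f a1 = n^{1/α} x_mʳ⁺¹`. With `s = p^{1/α}` and `q = (pn)^{1/((r+1)α)}` we have
`a0 = x_m q` and `n^{1/α} = qʳ⁺¹ / s`; cancelling `x_mʳ⁺¹ qʳ / s` leaves `1 + s q ≤ q`,
that is `s + q⁻¹ ≤ 1`.
-/

theorem strictMonoOn_mul_pow_add_pow_succ {R : Type*} [Semiring R] [LinearOrder R]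
    [IsStrictOrderedRing R] {c : R} (hc : 0 ≤ c) (r : ℕ) :
    StrictMonoOn (fun a : R => c * a ^ r + a ^ (r + 1)) (Set.Ici 0) := by
  intro a ha b _ hab
  exact add_lt_add_of_le_of_lt
    (mul_le_mul_of_nonneg_left (pow_le_pow_left₀ ha hab.le r) hc)
    (pow_lt_pow_left₀ hab ha r.succ_ne_zero)

theorem Real.rpow_one_div_natCast_mul_pow {x : ℝ} (hx : 0 ≤ x) (α : ℝ) (r : ℕ) :
    (x ^ (1 / (((r : ℝ) + 1) * α))) ^ (r + 1) = x ^ (1 / α) := by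
  rw [← Real.rpow_natCast, ← Real.rpow_mul hx]
  congr 1
  push_cast
  rcases eq_or_ne α 0 with rfl | hα
  · simp
  · field_simp

theorem one_add_mul_le_iff_add_inv_le_one {K : Type*} [Field K] [LinearOrder K]
    [IsStrictOrderedRing K] {s q : K} (hq : 0 < q) :
    1 + s * q ≤ q ↔ s + q⁻¹ ≤ 1 := by
  rw [← div_le_one hq, add_div, mul_div_cancel_right₀ _ hq.ne', one_div, add_comm]

theorem mul_inv_mul_pow_add_pow_succ_le_iff {K : Type*} [Field K] [LinearOrder K]
    [IsStrictOrderedRing K] {x s q : K} (hx : 0 < x) (hs : 0 < s) (hq : 0 < q) (r : ℕ) :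
    x * s⁻¹ * (x * q) ^ r + (x * q) ^ (r + 1) ≤ q ^ (r + 1) / s * x ^ (r + 1) ↔
      s + q⁻¹ ≤ 1 := by
  have hfactor : 0 < x ^ (r + 1) * q ^ r / s := by positivity
  have hlhs : x * s⁻¹ * (x * q) ^ r + (x * q) ^ (r + 1) =
      x ^ (r + 1) * q ^ r / s * (1 + s * q) := by
    field_simp
    ring
  have hrhs : q ^ (r + 1) / s * x ^ (r + 1) = x ^ (r + 1) * q ^ r / s * q := by
    ring
  rw [hlhs, hrhs, mul_le_mul_iff_right₀ hfactor, one_add_mul_le_iff_add_inv_le_one hq]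

theorem relaunch_latency_comparison_general (α x_m p : ℝ) (n r : ℕ)
    (hα : 1 < α) (hxm : 0 < x_m) (hp0 : 0 < p)
    (hn : 1 ≤ n)
    (a0 a1 : ℝ)
    (ha0 : a0 = x_m * (p * n) ^ (1 / (((r : ℝ) + 1) * α)))
    (ha1pos : 0 < a1)
    (ha1 : (n : ℝ) ^ (1 / α) * x_m ^ (r + 1)
      = x_m * p ^ (-1 / α) * a1 ^ r + a1 ^ (r + 1)) :
    x_m * p ^ (-1 / α) + Real.Gamma (1 - 1 / (((r : ℝ) + 1) * α)) * a1
        ≥ x_m * p ^ (-1 / α) + Real.Gamma (1 - 1 / (((r : ℝ) + 1) * α)) * a0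
      ↔ p ^ (1 / α) + ((n : ℝ) * p) ^ (-(1 / (((r : ℝ) + 1) * α))) ≤ 1 := by
  have hn0 : (0 : ℝ) < n := by exact_mod_cast hn
  have hpn : 0 < p * n := mul_pos hp0 hn0
  set q := (p * n) ^ (1 / (((r : ℝ) + 1) * α)) with hq_def
  have hq : 0 < q := Real.rpow_pos_of_pos hpn _
  have hs : 0 < p ^ (1 / α) := Real.rpow_pos_of_pos hp0 _
  have hΓ : 0 < Real.Gamma (1 - 1 / (((r : ℝ) + 1) * α)) := by
    refine Real.Gamma_pos_of_pos (sub_pos.2 ((div_lt_one (by positivity)).2 ?_))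
    nlinarith [(Nat.cast_nonneg r : (0 : ℝ) ≤ r)]
  have hn_root : (n : ℝ) ^ (1 / α) = q ^ (r + 1) / p ^ (1 / α) := by
    rw [hq_def, Real.rpow_one_div_natCast_mul_pow hpn.le, Real.mul_rpow hp0.le hn0.le]
    field_simp
  have hp_inv : p ^ (-1 / α) = (p ^ (1 / α))⁻¹ := by
    rw [neg_div, Real.rpow_neg hp0.le]
  have hnp_root : ((n : ℝ) * p) ^ (-(1 / (((r : ℝ) + 1) * α))) = q⁻¹ := by
    rw [mul_comm, Real.rpow_neg hpn.le]
  have hmono := strictMonoOn_mul_pow_add_pow_succ (c := x_m * p ^ (-1 / α)) (by positivity) r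
  have ha0_nonneg : (0 : ℝ) ≤ a0 := by rw [ha0]; positivity
  rw [ge_iff_le, add_le_add_iff_left, mul_le_mul_iff_right₀ hΓ,
    ← hmono.le_iff_le (Set.mem_Ici.2 ha0_nonneg) (Set.mem_Ici.2 ha1pos.le), ← ha1,
    ha0, hn_root, hp_inv, hnp_root]
  exact mul_inv_mul_pow_add_pow_succ_le_iff hxm hs hq r

/-- Relaunching has lower asymptotic latency than no relaunching for
Pareto(α, x_m) execution times iff `p^{1/α} + (np)^{-1/((r+1)α)} ≤ 1`.
Here `a0 = x_m (pn)^{1/((r+1)α)}` is the relaunching normalizing constant and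
`a1` is the positive solution of
`n^{1/α} x_m^{r+1} = x_m p^{-1/α} a^r + a^{r+1}`. -/
theorem relaunch_latency_comparison (α x_m p : ℝ) (n r : ℕ)
    (hα : 1 < α) (hxm : 0 < x_m) (hp0 : 0 < p) (hp1 : p < 1)
    (hn : 1 ≤ n) (hr : 0 < r)
    (a0 a1 : ℝ)
    (ha0 : a0 = x_m * (p * n) ^ (1 / (((r : ℝ) + 1) * α)))
    (ha1pos : 0 < a1)
    (ha1 : (n : ℝ) ^ (1 / α) * x_m ^ (r + 1)
      = x_m * p ^ (-1 / α) * a1 ^ r + a1 ^ (r + 1)) :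
    x_m * p ^ (-1 / α) + Real.Gamma (1 - 1 / (((r : ℝ) + 1) * α)) * a1
        ≥ x_m * p ^ (-1 / α) + Real.Gamma (1 - 1 / (((r : ℝ) + 1) * α)) * a0
      ↔ p ^ (1 / α) + ((n : ℝ) * p) ^ (-(1 / (((r : ℝ) + 1) * α))) ≤ 1 :=
  relaunch_latency_comparison_general α x_m p n r hα hxm hp0 hn a0 a1 ha0 ha1pos ha1
end
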